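/- (TUR for an environmental observable, Eq. (3).) Let G_E ∈ M_M(ℂ) be Hermitian with G_E f_0 = g_0 f_0 for some real eigenvalue g_0, and let G = I_n ⊗ I_n ⊗ G_E. Then (⟨G⟩ − g_0)² ≤ Ξ · Var[G], where ⟨G⟩ and Var[G] are the expectation and variance of G in the final pure state Ψ_T, and Ξ = Tr[ρ (V_0† V_0)^{−1}] − 1 is the survival activity. -/

import Mathlib

/-! The unnormalised vector `Ψ̃₀ = PsiTilde0` satisfies `⟨Ψ̃₀, Ψ_T⟩ = 1` and
`‖Ψ̃₀‖² = Tr[ρ (V₀†V₀)⁻¹] = Ξ + 1`, and since its environment factor is `f₀` it is an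
eigenvector of `G` with eigenvalue `g₀`. Hence `⟨Ψ̃₀ - Ψ_T, (G - ⟨G⟩) Ψ_T⟩ = g₀ - ⟨G⟩`, and
Cauchy–Schwarz gives `(⟨G⟩ - g₀)² ≤ ‖Ψ̃₀ - Ψ_T‖² Var[G] = Ξ Var[G]`. -/

open Matrix Kronecker Finset

noncomputable section

/-- Tensor product of two vectors. -/
def tvec {α β : Type*} (x : α → ℂ) (y : β → ℂ) : α × β → ℂ :=
  fun q => x q.1 * y q.2

/-- Standard basis vector `f_m` of the environment `ℂ^(M+1)`. -/
def stdv (M : ℕ) (m : Fin (M + 1)) : Fin (M + 1) → ℂ :=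
  fun k => if k = m then 1 else 0

variable {n M : ℕ}

/-- The final pure state `Ψ_T = ∑_{i,m} √p_i ψ_i ⊗ (V_m ψ_i) ⊗ f_m` of R+S+E. -/
def PsiT (ψ : Fin n → Fin n → ℂ) (p : Fin n → ℝ)
    (V : Fin (M + 1) → Matrix (Fin n) (Fin n) ℂ) :
    (Fin n × Fin n) × Fin (M + 1) → ℂ :=
  ∑ i, ∑ m, ((Real.sqrt (p i) : ℂ) • tvec (tvec (ψ i) (V m *ᵥ ψ i)) (stdv M m))

/-- The unnormalized vector `Ψ̃_0 = ∑_i √p_i ψ_i ⊗ ((V_0†)⁻¹ ψ_i) ⊗ f_0`. -/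
def PsiTilde0 (ψ : Fin n → Fin n → ℂ) (p : Fin n → ℝ)
    (V : Fin (M + 1) → Matrix (Fin n) (Fin n) ℂ) :
    (Fin n × Fin n) × Fin (M + 1) → ℂ :=
  ∑ i, ((Real.sqrt (p i) : ℂ) • tvec (tvec (ψ i) ((((V 0)ᴴ)⁻¹) *ᵥ ψ i)) (stdv M 0))

/-- The initial density matrix `ρ = ∑_i p_i ψ_i ψ_i†` of the principal system S. -/
def rho (ψ : Fin n → Fin n → ℂ) (p : Fin n → ℝ) : Matrix (Fin n) (Fin n) ℂ :=
  ∑ i, ((p i : ℂ) • vecMulVec (ψ i) (star (ψ i)))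

/-- Expectation value `⟨G⟩ = ⟨Ψ, G Ψ⟩` (its real part, which is all of it for Hermitian `G`). -/
def expval {ι : Type*} [Fintype ι] (G : Matrix ι ι ℂ) (Ψ : ι → ℂ) : ℝ :=
  (star Ψ ⬝ᵥ (G *ᵥ Ψ)).re

/-- Variance `Var[G] = ⟨Ψ, G² Ψ⟩ − ⟨G⟩²`. -/
def variance {ι : Type*} [Fintype ι] (G : Matrix ι ι ℂ) (Ψ : ι → ℂ) : ℝ :=
  expval (G * G) Ψ - (expval G Ψ) ^ 2

/-- The survival activity `Ξ = Tr[ρ (V_0† V_0)⁻¹] − 1`. -/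
def survivalActivity (ψ : Fin n → Fin n → ℂ) (p : Fin n → ℝ)
    (V : Fin (M + 1) → Matrix (Fin n) (Fin n) ℂ) : ℝ :=
  ((rho ψ p * ((V 0)ᴴ * V 0)⁻¹).trace).re - 1

section DotProduct

variable {ι : Type*} [Fintype ι]

lemma star_mulVec_dotProduct {κ R : Type*} [Fintype κ] [CommSemiring R] [StarRing R]
    (A : Matrix κ ι R) (x : ι → R) (y : κ → R) :
    star (A *ᵥ x) ⬝ᵥ y = star x ⬝ᵥ (Aᴴ *ᵥ y) := by
  rw [star_mulVec, ← dotProduct_mulVec]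

lemma norm_star_dotProduct_sq_le {𝕜 : Type*} [RCLike 𝕜] (u w : ι → 𝕜) :
    ‖star u ⬝ᵥ w‖ ^ 2 ≤ RCLike.re (star u ⬝ᵥ u) * RCLike.re (star w ⬝ᵥ w) := by
  have inner_eq (x y : ι → 𝕜) : inner 𝕜 (WithLp.toLp 2 x) (WithLp.toLp 2 y) = star x ⬝ᵥ y := by
    rw [EuclideanSpace.inner_toLp_toLp, dotProduct_comm]
  have h := inner_mul_inner_self_le (𝕜 := 𝕜) (WithLp.toLp 2 u) (WithLp.toLp 2 w)
  rw [norm_inner_symm (WithLp.toLp 2 w), ← sq] at h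
  simpa only [inner_eq] using h

lemma Matrix.IsHermitian.star_dotProduct_mulVec_self {A : Matrix ι ι ℂ} (hA : A.IsHermitian)
    (x : ι → ℂ) : star x ⬝ᵥ (A *ᵥ x) = (expval A x : ℂ) :=
  Complex.ext rfl (hA.im_star_dotProduct_mulVec_self x)

theorem sq_expval_sub_le_mul_variance {G : Matrix ι ι ℂ} (hG : G.IsHermitian) {Ψ Φ : ι → ℂ}
    {g : ℝ} (hΨ : star Ψ ⬝ᵥ Ψ = 1) (hΦΨ : star Φ ⬝ᵥ Ψ = 1) (hGΦ : G *ᵥ Φ = (g : ℂ) • Φ) :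
    (expval G Ψ - g) ^ 2 ≤ ((star Φ ⬝ᵥ Φ).re - 1) * variance G Ψ := by
  set c := expval G Ψ
  have hc : star Ψ ⬝ᵥ (G *ᵥ Ψ) = c := hG.star_dotProduct_mulVec_self Ψ
  have hGΨΨ : star (G *ᵥ Ψ) ⬝ᵥ Ψ = c := by rw [star_mulVec_dotProduct, hG.eq, hc]
  have hGΨGΨ : star (G *ᵥ Ψ) ⬝ᵥ (G *ᵥ Ψ) = expval (G * G) Ψ := by
    have hGG : (G * G).IsHermitian := by
      simpa only [hG.eq] using isHermitian_conjTranspose_mul_self G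
    rw [star_mulVec_dotProduct, hG.eq, mulVec_mulVec, hGG.star_dotProduct_mulVec_self]
  have hΨΦ : star Ψ ⬝ᵥ Φ = 1 := by rw [star_dotProduct, hΦΨ, star_one]
  have hΦGΨ : star Φ ⬝ᵥ (G *ᵥ Ψ) = g := by
    rw [← hG.eq, ← star_mulVec_dotProduct, hGΦ, star_smul, smul_dotProduct, hΦΨ]
    simp
  set u := Φ - Ψ
  set w := G *ᵥ Ψ - (c : ℂ) • Ψ
  have huw : star u ⬝ᵥ w = ((g - c : ℝ) : ℂ) := by
    simp only [u, w, star_sub, sub_dotProduct, dotProduct_sub, dotProduct_smul, smul_eq_mul,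
      hΦGΨ, hΦΨ, hc, hΨ]
    push_cast
    ring
  have huu : (star u ⬝ᵥ u).re = (star Φ ⬝ᵥ Φ).re - 1 := by
    simp only [u, star_sub, sub_dotProduct, dotProduct_sub, hΦΨ, hΨΦ, hΨ]
    simp
  have hww : (star w ⬝ᵥ w).re = variance G Ψ := by
    simp only [w, star_sub, star_smul, sub_dotProduct, dotProduct_sub, smul_dotProduct,
      dotProduct_smul, smul_eq_mul, RCLike.star_def, Complex.conj_ofReal, hGΨGΨ, hGΨΨ, hc, hΨ,
      variance]
    norm_cast
    ring
  calc (c - g) ^ 2 = ‖star u ⬝ᵥ w‖ ^ 2 := by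
        rw [huw, Complex.norm_real, Real.norm_eq_abs, sq_abs]; ring
    _ ≤ (star u ⬝ᵥ u).re * (star w ⬝ᵥ w).re := norm_star_dotProduct_sq_le u w
    _ = ((star Φ ⬝ᵥ Φ).re - 1) * variance G Ψ := by rw [huu, hww]

end DotProduct

section TensorVectors

variable {α β : Type*}

lemma tvec_smul_right (x : α → ℂ) (c : ℂ) (y : β → ℂ) : tvec x (c • y) = c • tvec x y := by
  funext q
  simp only [tvec, Pi.smul_apply, smul_eq_mul]
  ring

variable [Fintype α] [Fintype β]

lemma star_tvec_dotProduct_tvec (x x' : α → ℂ) (y y' : β → ℂ) :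
    star (tvec x y) ⬝ᵥ tvec x' y' = (star x ⬝ᵥ x') * (star y ⬝ᵥ y') := by
  simp only [dotProduct, tvec, Fintype.sum_prod_type, Finset.sum_mul_sum, Pi.star_apply,
    star_mul']
  exact Finset.sum_congr rfl fun a _ => Finset.sum_congr rfl fun b _ => by ring

lemma kronecker_mulVec_tvec (A : Matrix α α ℂ) (B : Matrix β β ℂ) (x : α → ℂ) (y : β → ℂ) :
    (A ⊗ₖ B) *ᵥ tvec x y = tvec (A *ᵥ x) (B *ᵥ y) := by
  funext q
  simp only [mulVec, dotProduct, kroneckerMap_apply, tvec, Fintype.sum_prod_type,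
    Finset.sum_mul_sum]
  exact Finset.sum_congr rfl fun a _ => Finset.sum_congr rfl fun b _ => by ring

end TensorVectors

lemma star_stdv_dotProduct_stdv (m l : Fin (M + 1)) :
    star (stdv M m) ⬝ᵥ stdv M l = if m = l then 1 else 0 := by
  rcases eq_or_ne m l with rfl | h
  · simp [stdv, dotProduct, apply_ite]
  · simp [stdv, dotProduct, apply_ite, h, h.symm]

section Branch

variable (ψ : Fin n → Fin n → ℂ) (p : Fin n → ℝ)

def branch (A : Matrix (Fin n) (Fin n) ℂ) (m : Fin (M + 1)) :
    (Fin n × Fin n) × Fin (M + 1) → ℂ :=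
  ∑ i, (Real.sqrt (p i) : ℂ) • tvec (tvec (ψ i) (A *ᵥ ψ i)) (stdv M m)

lemma PsiT_eq_sum_branch (V : Fin (M + 1) → Matrix (Fin n) (Fin n) ℂ) :
    PsiT ψ p V = ∑ m, branch ψ p (V m) m :=
  Finset.sum_comm

lemma PsiTilde0_eq_branch (V : Fin (M + 1) → Matrix (Fin n) (Fin n) ℂ) :
    PsiTilde0 ψ p V = branch ψ p ((V 0)ᴴ)⁻¹ 0 :=
  rfl

lemma trace_rho_mul (A : Matrix (Fin n) (Fin n) ℂ) :
    (rho ψ p * A).trace = ∑ i, (p i : ℂ) * (star (ψ i) ⬝ᵥ (A *ᵥ ψ i)) := by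
  simp only [rho, Finset.sum_mul, trace_sum, smul_mul_assoc, trace_smul, smul_eq_mul,
    vecMulVec_mul, trace_vecMulVec]
  refine Finset.sum_congr rfl fun i _ => ?_
  rw [dotProduct_comm, ← dotProduct_mulVec]

variable {ψ p}

lemma trace_rho (hortho : ∀ i j, star (ψ i) ⬝ᵥ ψ j = if i = j then (1 : ℂ) else 0)
    (hp1 : ∑ i, p i = 1) : (rho ψ p).trace = 1 := by
  rw [← mul_one (rho ψ p), trace_rho_mul]
  simp only [one_mulVec, hortho, if_pos, mul_one]
  exact_mod_cast hp1

lemma star_branch_dotProduct_branch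
    (hortho : ∀ i j, star (ψ i) ⬝ᵥ ψ j = if i = j then (1 : ℂ) else 0) (hp : ∀ i, 0 ≤ p i)
    (A B : Matrix (Fin n) (Fin n) ℂ) (m l : Fin (M + 1)) :
    star (branch ψ p A m) ⬝ᵥ branch ψ p B l
      = if m = l then (rho ψ p * (Aᴴ * B)).trace else 0 := by
  have hsq (i : Fin n) : (Real.sqrt (p i) : ℂ) * Real.sqrt (p i) = p i := by
    rw [← Complex.ofReal_mul, Real.mul_self_sqrt (hp i)]
  simp only [branch, star_sum, star_smul, sum_dotProduct, dotProduct_sum, smul_dotProduct,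
    dotProduct_smul, star_tvec_dotProduct_tvec, hortho, star_stdv_dotProduct_stdv, smul_eq_mul,
    RCLike.star_def, Complex.conj_ofReal]
  split_ifs
  · simp only [mul_one, ite_mul, one_mul, zero_mul, mul_ite, mul_zero, Finset.sum_ite_eq',
      Finset.mem_univ, if_true, trace_rho_mul]
    refine Finset.sum_congr rfl fun i _ => ?_
    rw [star_mulVec_dotProduct, mulVec_mulVec, ← hsq]
    ring
  · simp

lemma kronecker_mulVec_branch {GE : Matrix (Fin (M + 1)) (Fin (M + 1)) ℂ} {m : Fin (M + 1)}
    {g : ℂ} (hg : GE *ᵥ stdv M m = g • stdv M m) (A : Matrix (Fin n) (Fin n) ℂ) :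
    (((1 : Matrix (Fin n) (Fin n) ℂ) ⊗ₖ (1 : Matrix (Fin n) (Fin n) ℂ)) ⊗ₖ GE) *ᵥ branch ψ p A m
      = g • branch ψ p A m := by
  simp only [branch, mulVec_sum, mulVec_smul, Finset.smul_sum, kronecker_mulVec_tvec,
    one_mulVec, hg, tvec_smul_right, smul_comm g]

end Branch

section Purification

variable {ψ : Fin n → Fin n → ℂ} {p : Fin n → ℝ} {V : Fin (M + 1) → Matrix (Fin n) (Fin n) ℂ}

lemma star_PsiT_dotProduct_PsiT
    (hortho : ∀ i j, star (ψ i) ⬝ᵥ ψ j = if i = j then (1 : ℂ) else 0) (hp : ∀ i, 0 ≤ p i)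
    (hp1 : ∑ i, p i = 1) (hKraus : ∑ m, (V m)ᴴ * V m = 1) :
    star (PsiT ψ p V) ⬝ᵥ PsiT ψ p V = 1 := by
  simp only [PsiT_eq_sum_branch, star_sum, sum_dotProduct, dotProduct_sum,
    star_branch_dotProduct_branch hortho hp, Finset.sum_ite_eq', Finset.mem_univ, if_true]
  rw [← trace_sum, ← Finset.mul_sum, hKraus, mul_one, trace_rho hortho hp1]

lemma star_PsiTilde0_dotProduct_PsiT
    (hortho : ∀ i j, star (ψ i) ⬝ᵥ ψ j = if i = j then (1 : ℂ) else 0) (hp : ∀ i, 0 ≤ p i)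
    (hp1 : ∑ i, p i = 1) (hV0 : IsUnit (V 0)) :
    star (PsiTilde0 ψ p V) ⬝ᵥ PsiT ψ p V = 1 := by
  simp only [PsiTilde0_eq_branch, PsiT_eq_sum_branch, dotProduct_sum,
    star_branch_dotProduct_branch hortho hp, Finset.sum_ite_eq, Finset.mem_univ, if_true]
  rw [conjTranspose_nonsing_inv, conjTranspose_conjTranspose,
    nonsing_inv_mul _ ((isUnit_iff_isUnit_det _).mp hV0), mul_one, trace_rho hortho hp1]

lemma star_PsiTilde0_dotProduct_PsiTilde0
    (hortho : ∀ i j, star (ψ i) ⬝ᵥ ψ j = if i = j then (1 : ℂ) else 0) (hp : ∀ i, 0 ≤ p i) :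
    star (PsiTilde0 ψ p V) ⬝ᵥ PsiTilde0 ψ p V = (rho ψ p * ((V 0)ᴴ * V 0)⁻¹).trace := by
  rw [PsiTilde0_eq_branch, star_branch_dotProduct_branch hortho hp, if_pos rfl,
    conjTranspose_nonsing_inv, conjTranspose_conjTranspose, Matrix.mul_inv_rev]

end Purification

/-- **TUR for an environmental observable (Eq. (3)).** -/
theorem env_TUR
    (ψ : Fin n → Fin n → ℂ)
    (hortho : ∀ i j, star (ψ i) ⬝ᵥ ψ j = if i = j then (1 : ℂ) else 0)
    (p : Fin n → ℝ) (hp : ∀ i, 0 ≤ p i) (hp1 : ∑ i, p i = 1)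
    (V : Fin (M + 1) → Matrix (Fin n) (Fin n) ℂ)
    (hKraus : ∑ m, (V m)ᴴ * V m = 1)
    (hV0 : IsUnit (V 0))
    (GE : Matrix (Fin (M + 1)) (Fin (M + 1)) ℂ) (hGE : GE.IsHermitian)
    (g0 : ℝ) (hg0 : GE *ᵥ stdv M 0 = (g0 : ℂ) • stdv M 0) :
    (expval (((1 : Matrix (Fin n) (Fin n) ℂ) ⊗ₖ (1 : Matrix (Fin n) (Fin n) ℂ)) ⊗ₖ GE)
        (PsiT ψ p V) - g0) ^ 2
      ≤ survivalActivity ψ p V *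
        variance (((1 : Matrix (Fin n) (Fin n) ℂ) ⊗ₖ (1 : Matrix (Fin n) (Fin n) ℂ)) ⊗ₖ GE)
          (PsiT ψ p V) := by
  have hG :
      (((1 : Matrix (Fin n) (Fin n) ℂ) ⊗ₖ (1 : Matrix (Fin n) (Fin n) ℂ)) ⊗ₖ GE).IsHermitian := by
    simp only [IsHermitian, conjTranspose_kronecker, conjTranspose_one, hGE.eq]
  have hGΦ := kronecker_mulVec_branch (ψ := ψ) (p := p) hg0 ((V 0)ᴴ)⁻¹
  rw [← PsiTilde0_eq_branch] at hGΦ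
  have key := sq_expval_sub_le_mul_variance hG (star_PsiT_dotProduct_PsiT hortho hp hp1 hKraus)
    (star_PsiTilde0_dotProduct_PsiT hortho hp hp1 hV0) hGΦ
  rwa [star_PsiTilde0_dotProduct_PsiTilde0 hortho hp] at key
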